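/- If m is odd, then M_{q,m} is a nontrivial difference set in F_q if and only if (q, m) = (16, 3); in that case M_{16,3} is a (16, 6, 2)-difference set in F_16. -/

import Mathlib

/-!
Write `D = M_{q,m}`, so `k = |D| = f + 1`. Counting differences gives `m λ = f + 1`, hence
`k - λ = λ (m - 1)` and a nontrivial `D` needs `m ≥ 3`. Since `m` is odd, `D = -D`, so for a
primitive additive character `ψ` every coefficient `S(a) = ∑_{x ∈ D} ψ(a x)` with `a ≠ 0`
satisfies `S(a)^2 = k - λ`, i.e. `S(a) = ±c` for a single `c`. Fourier inversion at `0 ∈ D`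
and at a point outside `D` writes `q - k` and `-k` as `c` times a sum of signs and `c` times an
algebraic integer respectively; so `c` is an integer `C` dividing `k` and `q - k`, with
`C^2 = λ (m - 1)`. This forces `λ = m - 1` and `q = λ^2 (λ + 2)`, a prime power only for
`λ = 2`, i.e. `(q, m) = (16, 3)`.

Conversely, in characteristic `2` and for `a ≠ 0`, the pairs `(a + y, y)` in
`M_{16,3} = {0} ∪ μ_5` are `(a, 0)` and `(0, a)` if `a ∈ μ_5`, and otherwise `y` is a root of
`a³y² + a⁴y + 1`. So there are at most two of them, and as they total `k (k - 1) = 30` over the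
`15` values of `a`, there are exactly two.
-/

/-- `D` is a `(q, k, l)`-difference set in the additive group `F` (with `q = |F|`). -/
def IsDiffSet {F : Type*} [AddGroup F] (D : Set F) (k l : ℕ) : Prop :=
  D.ncard = k ∧
    ∀ a : F, a ≠ 0 → {x : F × F | x.1 ∈ D ∧ x.2 ∈ D ∧ x.1 - x.2 = a}.ncard = l

/-- `D` is a nontrivial difference set: a `(q, k, l)`-difference set of order `k - l > 1`. -/
def IsNontrivialDiffSet {F : Type*} [AddGroup F] (D : Set F) : Prop :=
  ∃ k l : ℕ, IsDiffSet D k l ∧ 1 < k - l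

/-- The set of nonzero `m`-th powers in `F`. -/
def Hset (F : Type*) [Field F] (m : ℕ) : Set F :=
  {x : F | x ≠ 0 ∧ ∃ y : F, y ^ m = x}

/-- The set of `m`-th powers in `F`, including `0`. -/
def Mset (F : Type*) [Field F] (m : ℕ) : Set F :=
  Hset F m ∪ {0}

open Finset

section DiffReprCount

variable {G : Type*} [AddGroup G] [DecidableEq G]

def diffReprCount (D : Finset G) (a : G) : ℕ :=
  #{p ∈ D ×ˢ D | p.1 - p.2 = a}

lemma isDiffSet_coe_iff [Fintype G] (D : Finset G) (k l : ℕ) :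
    IsDiffSet (D : Set G) k l ↔ #D = k ∧ ∀ a ≠ 0, diffReprCount D a = l := by
  have h (a : G) : {x : G × G | x.1 ∈ D ∧ x.2 ∈ D ∧ x.1 - x.2 = a}
      = ↑({p ∈ D ×ˢ D | p.1 - p.2 = a} : Finset (G × G)) := by
    ext; simp [and_assoc]
  simp only [IsDiffSet, Set.ncard_coe_finset, mem_coe, h, diffReprCount]

lemma diffReprCount_eq_card_filter_add_mem (D : Finset G) (a : G) :
    diffReprCount D a = #{y ∈ D | a + y ∈ D} := by
  refine card_nbij' Prod.snd (fun y => (a + y, y)) ?_ ?_ ?_ ?_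
  · rintro ⟨x, y⟩ h
    simp only [coe_filter, mem_product, Set.mem_ofPred_eq, sub_eq_iff_eq_add] at h ⊢
    exact ⟨h.1.2, h.2 ▸ h.1.1⟩
  · intro y
    simp +contextual
  · rintro ⟨x, y⟩
    simp +contextual [sub_eq_iff_eq_add]
  · intro y
    simp

lemma diffReprCount_zero (D : Finset G) : diffReprCount D 0 = #D := by
  simp [diffReprCount_eq_card_filter_add_mem]

lemma sum_diffReprCount [Fintype G] (D : Finset G) :
    ∑ a, diffReprCount D a = #D * #D := by
  rw [← card_product, card_eq_sum_card_fiberwise (fun p _ => mem_univ (p.1 - p.2))]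
  rfl

lemma card_sub_one_mul_add_card_eq [Fintype G] {D : Finset G} {l : ℕ}
    (hl : ∀ a ≠ 0, diffReprCount D a = l) :
    (Fintype.card G - 1) * l + #D = #D * #D := by
  rw [← sum_diffReprCount, ← sum_erase_add _ _ (mem_univ 0), diffReprCount_zero,
    sum_congr rfl fun a ha => hl a (ne_of_mem_erase ha), sum_const, card_erase_of_mem (mem_univ _),
    card_univ, smul_eq_mul]

end DiffReprCount

section Powers

variable {F : Type*} [Field F] {m f : ℕ}

lemma hset_eq_image_range (hm : m ≠ 0) :
    Hset F m = Units.val '' ((powMonoidHom m : Fˣ →* Fˣ).range : Set Fˣ) := by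
  ext x
  constructor
  · rintro ⟨hx, y, rfl⟩
    have hy : y ≠ 0 := by rintro rfl; exact hx (zero_pow hm)
    exact ⟨Units.mk0 (y ^ m) hx, ⟨Units.mk0 y hy, Units.ext (by simp)⟩, rfl⟩
  · rintro ⟨_, ⟨u, rfl⟩, rfl⟩
    exact ⟨(u ^ m).ne_zero, u, by simp⟩

lemma zero_mem_mset (m : ℕ) : (0 : F) ∈ Mset F m := Or.inr rfl

lemma neg_mem_mset (hodd : Odd m) {x : F} (hx : x ∈ Mset F m) : -x ∈ Mset F m := by
  rcases hx with ⟨hx0, y, rfl⟩ | rfl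
  · exact Or.inl ⟨neg_ne_zero.2 hx0, -y, hodd.neg_pow y⟩
  · simpa using zero_mem_mset m

variable [Fintype F]

lemma mul_ne_zero_of_card_eq (hcard : Fintype.card F = m * f + 1) : m * f ≠ 0 := by
  have := Fintype.one_lt_card (α := F)
  omega

lemma ncard_hset (hcard : Fintype.card F = m * f + 1) : (Hset F m).ncard = f := by
  have hm := left_ne_zero_of_mul (mul_ne_zero_of_card_eq hcard)
  rw [hset_eq_image_range hm, Set.ncard_image_of_injective _ Units.val_injective,
    ← Nat.card_coe_set_eq, SetLike.coe_sort_coe, IsCyclic.card_powMonoidHom_range,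
    Nat.card_units, Nat.card_eq_fintype_card, hcard, Nat.add_sub_cancel,
    Nat.gcd_eq_right (dvd_mul_right m f), Nat.mul_div_cancel_left f (Nat.pos_of_ne_zero hm)]

lemma ncard_mset (hcard : Fintype.card F = m * f + 1) : (Mset F m).ncard = f + 1 := by
  rw [Mset, Set.union_singleton, Set.ncard_insert_of_notMem (fun h => h.1 rfl), ncard_hset hcard]

lemma eq_zero_or_pow_eq_one_of_mem_mset (hcard : Fintype.card F = m * f + 1) {x : F}
    (hx : x ∈ Mset F m) : x = 0 ∨ x ^ f = 1 := by
  rcases hx with ⟨hx0, y, rfl⟩ | hx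
  · have hm := left_ne_zero_of_mul (mul_ne_zero_of_card_eq hcard)
    right
    rw [← pow_mul, ← Nat.add_sub_cancel (m * f) 1, ← hcard]
    exact FiniteField.pow_card_sub_one_eq_one y (by rintro rfl; exact hx0 (zero_pow hm))
  · exact Or.inl hx

end Powers

section SixteenThree

open Polynomial in
lemma card_le_two_of_forall_quadratic_eq_zero {R : Type*} [CommRing R] [IsDomain R] {a b c : R}
    (ha : a ≠ 0) {Z : Finset R} (hZ : ∀ y ∈ Z, a * y ^ 2 + b * y + c = 0) : #Z ≤ 2 := by
  have hdeg := natDegree_quadratic (b := b) (c := c) ha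
  have hp : C a * X ^ 2 + C b * X + C c ≠ 0 := ne_zero_of_natDegree_gt (hdeg ▸ two_pos)
  refine hdeg ▸ card_le_degree_of_subset_roots fun y hy => ?_
  simpa [mem_roots hp] using hZ y hy

variable {F : Type*} [Field F]

lemma quadratic_of_pow_five_eq_one (h2 : (2 : F) = 0) {a y : F} (ha : a ≠ 0) (hy : y ^ 5 = 1)
    (hay : (a + y) ^ 5 = 1) : a ^ 3 * y ^ 2 + a ^ 4 * y + 1 = 0 := by
  refine (mul_eq_zero.1 ?_).resolve_left ha
  linear_combination y * hay - (y + 5 * a) * hy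
    - (2 * a ^ 4 * y ^ 2 + 5 * a ^ 3 * y ^ 3 + 5 * a ^ 2 * y ^ 4 + 2 * a) * h2

lemma eq_of_quadratic_of_pow_five_eq_one {a y : F} (ha : a ≠ 0) (ha5 : a ^ 5 = 1)
    (hy : y ^ 5 = 1) (hq : a ^ 3 * y ^ 2 + a ^ 4 * y + 1 = 0) : y = a := by
  have hcube : y ^ 3 - a ^ 3 = 0 := by
    refine (mul_eq_zero.1 ?_).resolve_left (pow_ne_zero 3 ha)
    linear_combination (y - a) * hq + (y - a) * ha5
  linear_combination (y ^ 3 + a ^ 3) * hcube - y * hy + a * ha5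

lemma diffReprCount_le_two [DecidableEq F] (h2 : (2 : F) = 0) {D : Finset F}
    (hD : ∀ y ∈ D, y = 0 ∨ y ^ 5 = 1) {a : F} (ha : a ≠ 0) : diffReprCount D a ≤ 2 := by
  have eq_of_add_eq_zero {y : F} (h : a + y = 0) : y = a := by linear_combination h - a * h2
  have hquad {y : F} (hy : y ∈ D) (hay : a + y ∈ D) (hy0 : y ≠ 0) (hay0 : a + y ≠ 0) :
      a ^ 3 * y ^ 2 + a ^ 4 * y + 1 = 0 :=
    quadratic_of_pow_five_eq_one h2 ha ((hD y hy).resolve_left hy0) ((hD _ hay).resolve_left hay0)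
  rw [diffReprCount_eq_card_filter_add_mem]
  by_cases haD : a ∈ D
  · have ha5 := (hD a haD).resolve_left ha
    refine (card_le_card fun y hy => ?_).trans (card_le_two (a := 0) (b := a))
    obtain ⟨hy, hay⟩ := mem_filter.1 hy
    by_cases hy0 : y = 0
    · simp [hy0]
    by_cases hay0 : a + y = 0
    · simp [eq_of_add_eq_zero hay0]
    have := eq_of_quadratic_of_pow_five_eq_one ha ha5 ((hD y hy).resolve_left hy0)
      (hquad hy hay hy0 hay0)
    simp [this]
  · refine card_le_two_of_forall_quadratic_eq_zero (b := a ^ 4) (c := 1) (pow_ne_zero 3 ha)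
      fun y hy => ?_
    obtain ⟨hy, hay⟩ := mem_filter.1 hy
    refine hquad hy hay ?_ ?_
    · rintro rfl
      exact haD (by simpa using hay)
    · intro h
      exact haD (eq_of_add_eq_zero h ▸ hy)

variable [Fintype F]

lemma two_eq_zero_of_card_eq_sixteen (hcard : Fintype.card F = 16) : (2 : F) = 0 := by
  have h16 := FiniteField.cast_card_eq_zero F
  rw [hcard] at h16
  exact pow_eq_zero_iff (n := 4) (by norm_num) |>.1 (by linear_combination h16)

lemma isDiffSet_mset_three (hcard : Fintype.card F = 16) :
    IsDiffSet (Mset F 3) 6 2 := by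
  classical
  have hcard' : Fintype.card F = 3 * 5 + 1 := hcard
  rw [← Set.coe_toFinset (Mset F 3), isDiffSet_coe_iff]
  set D := (Mset F 3).toFinset
  have hk : #D = 6 := by rw [← Set.ncard_eq_toFinset_card', ncard_mset hcard']
  have hle : ∀ a ∈ univ.erase 0, diffReprCount D a ≤ 2 := fun a ha =>
    diffReprCount_le_two (two_eq_zero_of_card_eq_sixteen hcard)
      (fun y hy => eq_zero_or_pow_eq_one_of_mem_mset hcard' (Set.mem_toFinset.1 hy))
      (ne_of_mem_erase ha)
  have hsum : ∑ a ∈ univ.erase 0, diffReprCount D a = ∑ a ∈ univ.erase (0 : F), 2 := by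
    have := sum_diffReprCount D
    rw [← sum_erase_add _ _ (mem_univ 0), diffReprCount_zero, hk] at this
    rw [sum_const, card_erase_of_mem (mem_univ _), card_univ, hcard, smul_eq_mul]
    omega
  exact ⟨hk, fun a ha => (sum_eq_sum_iff_of_le hle).1 hsum a (mem_erase.2 ⟨ha, mem_univ a⟩)⟩

end SixteenThree

lemma exists_int_eq_of_isIntegral_of_mul_eq {x : ℂ} (hx : IsIntegral ℤ x) {a b : ℤ} (ha : a ≠ 0)
    (h : (a : ℂ) * x = b) : ∃ z : ℤ, x = z := by
  have hx' : x = algebraMap ℚ ℂ (b / a) := by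
    rw [map_div₀, map_intCast, map_intCast, eq_div_iff (by exact_mod_cast ha), mul_comm, h]
  rw [hx', isIntegral_algebraMap_iff (algebraMap ℚ ℂ).injective,
    IsIntegrallyClosed.isIntegral_iff] at hx
  obtain ⟨z, hz⟩ := hx
  exact ⟨z, by rw [hx', ← hz]; simp⟩

section CharacterSums

variable {R : Type*} [CommRing R] {ψ : AddChar R ℂ} {D : Finset R}

def charSum (ψ : AddChar R ℂ) (D : Finset R) (a : R) : ℂ :=
  ∑ x ∈ D, ψ (a * x)

lemma charSum_neg (hD : ∀ x ∈ D, -x ∈ D) (a : R) : charSum ψ D (-a) = charSum ψ D a :=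
  sum_nbij' Neg.neg Neg.neg (fun x hx => hD x hx) (fun x hx => hD x hx) (fun x _ => neg_neg x)
    (fun x _ => neg_neg x) (fun x _ => by simp)

variable [Fintype R]

lemma isIntegral_addChar (ψ : AddChar R ℂ) (t : R) : IsIntegral ℤ (ψ t) := by
  refine IsIntegral.of_pow (Fintype.card_pos (α := R)) ?_
  rw [← AddChar.map_nsmul_eq_pow, card_nsmul_eq_zero, AddChar.map_zero_eq_one]
  exact isIntegral_one

lemma isIntegral_charSum (ψ : AddChar R ℂ) (D : Finset R) (a : R) :
    IsIntegral ℤ (charSum ψ D a) :=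
  IsIntegral.sum _ fun _ _ => isIntegral_addChar ψ _

variable [DecidableEq R]

lemma charSum_mul_charSum_neg (hψ : ψ.IsPrimitive) {l : ℕ}
    (hl : ∀ b ≠ 0, diffReprCount D b = l) {a : R} (ha : a ≠ 0) :
    charSum ψ D a * charSum ψ D (-a) = #D - l := by
  have hcount (b : R) : (diffReprCount D b : ℂ) = l + if b = 0 then (#D - l : ℂ) else 0 := by
    split_ifs with hb
    · rw [hb, diffReprCount_zero]; ring
    · rw [hl b hb, add_zero]
  calc charSum ψ D a * charSum ψ D (-a)
      = ∑ p ∈ D ×ˢ D, ψ (a * (p.1 - p.2)) := by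
        rw [charSum, charSum, sum_mul_sum, ← sum_product']
        refine sum_congr rfl fun p _ => ?_
        rw [← AddChar.map_add_eq_mul]
        exact congrArg ψ (by ring)
    _ = ∑ b, (diffReprCount D b : ℂ) * ψ (a * b) := by
        rw [← sum_fiberwise_of_maps_to (g := fun p => p.1 - p.2) (fun p _ => mem_univ _)]
        refine sum_congr rfl fun b _ => ?_
        rw [diffReprCount, ← nsmul_eq_mul, ← sum_const]
        exact sum_congr rfl fun p hp => by rw [(mem_filter.1 hp).2]
    _ = l * ∑ b, ψ (b * a) + (#D - l) := by
        simp only [hcount, add_mul, sum_add_distrib, ite_mul, zero_mul, sum_ite_eq', mem_univ,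
          if_true, AddChar.map_zero_eq_one, mul_one, mul_sum, mul_comm a]
    _ = #D - l := by rw [AddChar.sum_mulShift a hψ, if_neg ha]; ring

lemma sum_charSum_mul_addChar (hψ : ψ.IsPrimitive) (c : R) :
    ∑ a, charSum ψ D a * ψ (-(a * c)) = if c ∈ D then (Fintype.card R : ℂ) else 0 := by
  calc ∑ a, charSum ψ D a * ψ (-(a * c))
      = ∑ x ∈ D, ∑ a, ψ (a * (x - c)) := by
        rw [sum_comm]
        simp only [charSum, sum_mul, ← AddChar.map_add_eq_mul]
        exact sum_congr rfl fun x _ => sum_congr rfl fun a _ => congrArg ψ (by ring)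
    _ = ∑ x ∈ D, if x = c then (Fintype.card R : ℂ) else 0 := by
        simp only [AddChar.sum_mulShift _ hψ, sub_eq_zero, Nat.cast_ite, Nat.cast_zero]
    _ = if c ∈ D then (Fintype.card R : ℂ) else 0 := sum_ite_eq' D c _

lemma charSum_sq (hψ : ψ.IsPrimitive) {l : ℕ} (hl : ∀ b ≠ 0, diffReprCount D b = l)
    (hneg : ∀ x ∈ D, -x ∈ D) {a : R} (ha : a ≠ 0) : charSum ψ D a ^ 2 = #D - l := by
  rw [sq, ← charSum_mul_charSum_neg hψ hl ha, charSum_neg hneg]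

lemma sum_erase_zero_charSum_mul_addChar (hψ : ψ.IsPrimitive) (c : R) :
    ∑ a ∈ univ.erase 0, charSum ψ D a * ψ (-(a * c))
      = (if c ∈ D then (Fintype.card R : ℂ) else 0) - #D := by
  rw [← sum_charSum_mul_addChar hψ c, ← sum_erase_add _ _ (mem_univ 0)]
  simp [charSum]

lemma exists_int_sq_eq_of_neg_mem (hψ : ψ.IsPrimitive) {l : ℕ}
    (hl : ∀ b ≠ 0, diffReprCount D b = l) (hneg : ∀ x ∈ D, -x ∈ D) (h0 : 0 ∈ D) {c₀ : R}
    (hc₀ : c₀ ∉ D) :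
    ∃ C : ℤ, C ^ 2 = #D - l ∧ C ∣ #D ∧ C ∣ Fintype.card R - #D := by
  have hc₀0 : c₀ ≠ 0 := by rintro rfl; exact hc₀ h0
  have hsq₀ := charSum_sq hψ hl hneg hc₀0
  obtain ⟨c, hc⟩ : ∃ c, charSum ψ D c₀ = c := ⟨_, rfl⟩
  rw [hc] at hsq₀
  have hsign : ∀ a ∈ univ.erase 0, ∃ e : ℤ, charSum ψ D a = e * c := by
    intro a ha
    have hsq := (charSum_sq hψ hl hneg (ne_of_mem_erase ha)).trans hsq₀.symm
    rcases sq_eq_sq_iff_eq_or_eq_neg.1 hsq with h | h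
    · exact ⟨1, by simp [h]⟩
    · exact ⟨-1, by simp [h]⟩
  choose! ε hε using hsign
  have hsum (y : R) : c * ∑ a ∈ univ.erase 0, (ε a : ℂ) * ψ (-(a * y))
      = (if y ∈ D then (Fintype.card R : ℂ) else 0) - #D := by
    rw [← sum_erase_zero_charSum_mul_addChar hψ y, mul_sum]
    exact sum_congr rfl fun a ha => by rw [hε a ha]; ring
  have hq : ((Fintype.card R - #D : ℤ) : ℂ) ≠ 0 :=
    Int.cast_ne_zero.2 (sub_ne_zero.2 (Nat.cast_injective.ne (card_lt_univ_of_notMem hc₀).ne'))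
  have hE : ((∑ a ∈ univ.erase 0, ε a : ℤ) : ℂ) * c = (Fintype.card R - #D : ℤ) := by
    simpa [mul_comm, h0] using hsum 0
  obtain ⟨C, rfl⟩ := exists_int_eq_of_isIntegral_of_mul_eq (hc ▸ isIntegral_charSum ψ D c₀)
    (fun h => hq (by rw [← hE, h]; simp)) hE
  have hW := hsum c₀
  rw [if_neg hc₀, zero_sub] at hW
  have hWint : IsIntegral ℤ (∑ a ∈ univ.erase 0, (ε a : ℂ) * ψ (-(a * c₀))) :=
    IsIntegral.sum _ fun a _ => (isIntegral_algebraMap (x := ε a)).mul (isIntegral_addChar ψ _)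
  obtain ⟨J, hJ⟩ := exists_int_eq_of_isIntegral_of_mul_eq hWint (a := C) (b := -#D)
    (fun h => hq (by rw [← hE, h]; simp)) (by exact_mod_cast hW)
  refine ⟨C, by exact_mod_cast hsq₀, ⟨-J, ?_⟩, ⟨∑ a ∈ univ.erase 0, ε a, ?_⟩⟩
  · rw [hJ] at hW
    exact_mod_cast (by push_cast; linear_combination hW : ((#D : ℤ) : ℂ) = (C * -J : ℤ))
  · exact_mod_cast (by rw [← hE]; push_cast; ring :
      ((Fintype.card R - #D : ℤ) : ℂ) = (C * ∑ a ∈ univ.erase 0, ε a : ℤ))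

end CharacterSums

lemma eq_sub_one_of_sq_eq_mul {m l C : ℤ} (hl : 0 < l) (hm : 1 < m) (hC : C ^ 2 = l * (m - 1))
    (hCk : C ∣ m * l) (hCq : C ∣ (m - 1) * (m * l - 1)) : l = m - 1 := by
  have hC0 : C ≠ 0 := by
    rintro rfl
    nlinarith
  obtain ⟨e, he⟩ : C ∣ m - 1 := by
    have h := dvd_sub (dvd_mul_of_dvd_right hCk (m - 1)) hCq
    rwa [show (m - 1) * (m * l) - (m - 1) * (m * l - 1) = m - 1 by ring] at h
  have hCl : C = l * e := mul_left_cancel₀ hC0 (by linear_combination hC + l * he)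
  have he1 : e * e = 1 := by
    have hem : e ∣ m := (mul_dvd_mul_iff_left hl.ne').1 (by rw [← hCl, mul_comm l]; exact hCk)
    have hem1 : e ∣ m - 1 := ⟨C, by rw [he, mul_comm]⟩
    exact Int.isUnit_mul_self (isUnit_of_dvd_one (by simpa using dvd_sub hem hem1))
  linear_combination -he - e * hCl - l * he1

lemma eq_two_of_sq_mul_add_two_eq_prime_pow {l p n : ℕ} (hp : p.Prime) (hl : 2 ≤ l)
    (h : l ^ 2 * (l + 2) = p ^ n) : l = 2 := by
  obtain ⟨i, -, hi⟩ := (Nat.dvd_prime_pow hp).1 (⟨l * (l + 2), by rw [← h]; ring⟩ : l ∣ p ^ n)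
  obtain ⟨j, -, hj⟩ := (Nat.dvd_prime_pow hp).1 (⟨l ^ 2, by rw [← h]; ring⟩ : l + 2 ∣ p ^ n)
  have hi0 : i ≠ 0 := by rintro rfl; simp at hi; omega
  have hj0 : j ≠ 0 := by rintro rfl; simp at hj
  obtain rfl : p = 2 := by
    have hpl : p ∣ l := hi ▸ dvd_pow_self p hi0
    have hpl2 : p ∣ l + 2 := hj ▸ dvd_pow_self p hj0
    exact (Nat.prime_dvd_prime_iff_eq hp Nat.prime_two).1 ((Nat.dvd_add_right hpl).1 hpl2)
  by_contra hl2
  obtain rfl | hi2 : i = 1 ∨ 2 ≤ i := by omega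
  · exact hl2 (by simpa using hi)
  obtain rfl | hj2 : j = 1 ∨ 2 ≤ j := by omega
  · simp at hj
    omega
  have h4l : 4 ∣ l := hi ▸ pow_dvd_pow 2 hi2
  have h4l2 : 4 ∣ l + 2 := hj ▸ pow_dvd_pow 2 hj2
  omega

lemma card_eq_sixteen_of_isDiffSet_mset {F : Type*} [Field F] [Fintype F] {m f k l : ℕ}
    (hodd : Odd m) (hcard : Fintype.card F = m * f + 1) (hD : IsDiffSet (Mset F m) k l)
    (hkl : 1 < k - l) : Fintype.card F = 16 ∧ m = 3 := by
  classical
  rw [← Set.coe_toFinset (Mset F m), isDiffSet_coe_iff] at hD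
  obtain ⟨rfl, hl⟩ := hD
  set D := (Mset F m).toFinset
  have hk : #D = f + 1 := by rw [← Set.ncard_eq_toFinset_card', ncard_mset hcard]
  have hf : f ≠ 0 := right_ne_zero_of_mul (mul_ne_zero_of_card_eq hcard)
  have hml : m * l = f + 1 := by
    have h := card_sub_one_mul_add_card_eq hl
    rw [hcard, hk, Nat.add_sub_cancel] at h
    exact Nat.eq_of_mul_eq_mul_left (Nat.pos_of_ne_zero hf) (by linarith)
  have hm3 : 3 ≤ m := by
    obtain ⟨_ | t, rfl⟩ := hodd <;> omega
  obtain ⟨c₀, -, hc₀⟩ := exists_mem_notMem_of_card_lt_card (s := D) (t := univ)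
    (by rw [card_univ, hk, hcard]; nlinarith [Nat.pos_of_ne_zero hf])
  obtain ⟨C, hC2, hCk, hCq⟩ := exists_int_sq_eq_of_neg_mem
    (AddChar.FiniteField.primitiveChar_to_Complex_isPrimitive F) hl
    (fun x hx => Set.mem_toFinset.2 (neg_mem_mset hodd (Set.mem_toFinset.1 hx)))
    (Set.mem_toFinset.2 (zero_mem_mset m)) hc₀
  have hlm : (l : ℤ) = m - 1 := by
    have hml' : (m * l : ℤ) = f + 1 := by exact_mod_cast hml
    have hcard' : (Fintype.card F : ℤ) = m * f + 1 := by exact_mod_cast hcard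
    refine eq_sub_one_of_sq_eq_mul (C := C) (by nlinarith) (by omega) ?_ ?_ ?_
    · rw [hC2, hk]; push_cast; linear_combination -hml'
    · rw [hk] at hCk
      push_cast at hCk
      rwa [hml']
    · rw [hcard', hk] at hCq
      push_cast at hCq
      rwa [show (m - 1) * (m * l - 1 : ℤ) = m * f + 1 - (f + 1) by
        linear_combination (m - 1) * hml']
  obtain ⟨n, hp, hpn⟩ := FiniteField.card F (ringChar F)
  have hq : Fintype.card F = l ^ 2 * (l + 2) := by
    have hm : m = l + 1 := by omega
    subst hm
    zify at hcard hml ⊢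
    linear_combination hcard - (l + 1) * hml
  have hl2 := eq_two_of_sq_mul_add_two_eq_prime_pow hp (by omega) (hq ▸ hpn)
  subst hl2
  exact ⟨hq, by omega⟩

theorem stmt7_general (m f : ℕ) (hodd : Odd m)
    (F : Type*) [Field F] [Fintype F]
    (hcard : Fintype.card F = m * f + 1) :
    (IsNontrivialDiffSet (Mset F m) ↔ Fintype.card F = 16 ∧ m = 3) ∧
      (Fintype.card F = 16 → m = 3 → IsDiffSet (Mset F m) 6 2) := by
  have h16 : Fintype.card F = 16 → m = 3 → IsDiffSet (Mset F m) 6 2 := by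
    rintro hq rfl
    exact isDiffSet_mset_three hq
  refine ⟨⟨fun ⟨k, l, hD, hkl⟩ => card_eq_sixteen_of_isDiffSet_mset hodd hcard hD hkl, ?_⟩, h16⟩
  rintro ⟨hq, hm⟩
  exact ⟨6, 2, h16 hq hm, by norm_num⟩

theorem stmt7 (m f : ℕ) (hm : 0 < m) (hf : 0 < f) (hodd : Odd m)
    (F : Type*) [Field F] [Fintype F]
    (hq : ∃ p n : ℕ, p.Prime ∧ 0 < n ∧ Fintype.card F = p ^ n)
    (hcard : Fintype.card F = m * f + 1) :
    (IsNontrivialDiffSet (Mset F m) ↔ Fintype.card F = 16 ∧ m = 3) ∧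
      (Fintype.card F = 16 → m = 3 → IsDiffSet (Mset F m) 6 2) :=
  stmt7_general m f hodd F hcard
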